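/- Theorem 1: The operator P(∂_z) is a bijective ℂ-linear map of ℂ[[z]] onto itself if and only if the following two conditions hold: (a) m = 0 (the lower ordinate of the Newton polygon of P(∂_z) equals zero); and (b) (non-resonance condition) W_0(n) ≠ 0 for every n ∈ ℕ₀. -/

import Mathlib

open PowerSeries

/-- Formal differentiation `∂_z` on `ℂ[[z]]` as a `ℂ`-linear map. -/
noncomputable def dz : PowerSeries ℂ →ₗ[ℂ] PowerSeries ℂ where
  toFun u := PowerSeries.mk fun n => ((n : ℂ) + 1) * PowerSeries.coeff (n + 1) u
  map_add' u v := by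
    ext n
    simp [mul_add]
  map_smul' c u := by
    ext n
    simp
    ring

/-- The order of vanishing at `0` of a formal power series. -/
noncomputable def ordz (g : PowerSeries ℂ) : ℕ := sInf {k : ℕ | PowerSeries.coeff k g ≠ 0}

/-- The operator `P(∂_z) u = Σ_{j∈Λ} a_j · ∂_z^j u`. -/
noncomputable def Pop (Λ : Finset ℕ) (a : ℕ → PowerSeries ℂ) :
    PowerSeries ℂ →ₗ[ℂ] PowerSeries ℂ :=
  ∑ j ∈ Λ, (LinearMap.mulLeft ℂ (a j)).comp (dz ^ j)

/-- The characteristic polynomial `W_q` evaluated at a natural number `n`: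
`W_q(n) = Σ_{j∈Λ, α_j−j=q} a_{j,j+q} · n(n−1)⋯(n−j+1)`. -/
noncomputable def W (Λ : Finset ℕ) (a : ℕ → PowerSeries ℂ) (q : ℤ) (n : ℕ) : ℂ :=
  ∑ j ∈ Λ.filter (fun j => (ordz (a j) : ℤ) - j = q),
    PowerSeries.coeff (ordz (a j)) (a j) * (n.descFactorial j : ℂ)

/-!
Write `d = -m` when `m ≤ 0`. Every term `a_j ∂^j u` then reads the coefficients of `u` at most
`d` places ahead, so the `N`-th coefficient of `P(∂_z) u` is `W_m(N + d) u_{N + d}` plus a linear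
expression in `u_0, …, u_{N+d-1}`: `P(∂_z)` is triangular with diagonal `W_m` shifted by `d`.
For `m = 0` this is an honest triangular system, solvable uniquely iff no diagonal entry vanishes.
For `m < 0` the polynomial `W_m` has finitely many roots, so past some `M` the system can be
solved forward from any start, while the first `M` equations leave `d > 0` free unknowns: a
nonzero kernel. For `m > 0` every `a_j` vanishes at `0`, so `1` is not in the range.
-/

open Filter

theorem Nat.exists_forall_eq_restrict {α : Type*} [Zero α] (G : ℕ → (ℕ → α) → α) :
    ∃ f : ℕ → α, ∀ n, f n = G n (fun i => if i < n then f i else 0) := by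
  refine ⟨Nat.strongRec fun n rec => G n fun i => if h : i < n then rec i h else 0, fun n => ?_⟩
  beta_reduce
  rw [Nat.strongRec_eq]
  simp only [dite_eq_ite]

namespace PowerSeries

variable {K : Type*} [Field K]

/-- By linearity: the `N`-th coefficient of `T u` depends only on `u_0, …, u_{N+d}`, and on
`u_{N+d}` through the factor `c (N + d)`. -/
def IsTriangular (T : K⟦X⟧ →ₗ[K] K⟦X⟧) (d : ℕ) (c : ℕ → K) : Prop :=
  ∀ u N, (∀ i < N + d, coeff i u = 0) → coeff N (T u) = c (N + d) * coeff (N + d) u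

namespace IsTriangular

variable {T : K⟦X⟧ →ₗ[K] K⟦X⟧} {d : ℕ} {c : ℕ → K}

theorem coeff_apply_congr (hT : IsTriangular T d c) {u v : K⟦X⟧} {N : ℕ}
    (huv : ∀ i ≤ N + d, coeff i u = coeff i v) : coeff N (T u) = coeff N (T v) := by
  have h := hT (u - v) N fun i hi => by rw [map_sub, huv i hi.le, sub_self]
  rwa [map_sub, map_sub, map_sub, huv _ le_rfl, sub_self, mul_zero, sub_eq_zero] at h

theorem exists_apply_eq (hT : IsTriangular T d c) {M : ℕ} (hc : ∀ n ≥ M, c n ≠ 0)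
    {p w : K⟦X⟧} (hp : ∀ N, N + d < M → coeff N (T p) = coeff N w) :
    ∃ u, (∀ i < M, coeff i u = coeff i p) ∧ T u = w := by
  -- copy `p` below `M`, then solve the `(n - d)`-th equation for `u_n`
  obtain ⟨f, hf⟩ := Nat.exists_forall_eq_restrict fun n g =>
    if n < M then coeff n p else (coeff (n - d) w - coeff (n - d) (T (mk g))) / c n
  have hfM : ∀ i < M, f i = coeff i p := fun i hi => by rw [hf, if_pos hi]
  refine ⟨mk f, fun i hi => by rw [coeff_mk, hfM i hi], ?_⟩
  ext N
  rcases lt_or_ge (N + d) M with hN | hN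
  · rw [← hp N hN]
    exact hT.coeff_apply_congr fun i hi => by rw [coeff_mk, hfM i (by omega)]
  · set v := mk fun i => if i < N + d then f i else 0
    have hsplit := hT (mk f - v) N fun i hi => by simp [v, hi]
    have hfn : f (N + d) = (coeff N w - coeff N (T v)) / c (N + d) := by
      rw [hf, if_neg (by omega), Nat.add_sub_cancel]
    rw [map_sub, map_sub, map_sub] at hsplit
    simp only [v, coeff_mk, lt_irrefl, if_false, sub_zero] at hsplit
    rw [sub_eq_iff_eq_add.mp hsplit, hfn, mul_div_cancel₀ _ (hc _ hN)]
    ring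

theorem coeff_eq_zero_of_coeff_apply_eq_zero (hT : IsTriangular T 0 c) {n : ℕ}
    (hc : ∀ k < n, c k ≠ 0) {u : K⟦X⟧} (hu : ∀ k < n, coeff k (T u) = 0) :
    ∀ k < n, coeff k u = 0 := by
  induction n with
  | zero => simp
  | succ n ih =>
    have hlt := ih (fun k hk => hc k (by omega)) fun k hk => hu k (by omega)
    intro k hk
    rcases Nat.lt_succ_iff_lt_or_eq.mp hk with hk | rfl
    · exact hlt k hk
    · have h := hT u k hlt
      rw [hu k hk] at h
      exact (mul_eq_zero.mp h.symm).resolve_left (hc k hk)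

theorem bijective_iff (hT : IsTriangular T 0 c) : Function.Bijective T ↔ ∀ n, c n ≠ 0 := by
  refine ⟨fun hbij => ?_, fun hc => ⟨?_, fun w => ?_⟩⟩
  · classical
    by_contra! hzero
    -- the first vanishing diagonal entry `c n` keeps `X ^ n` out of the range
    obtain ⟨n, hn, hmin⟩ : ∃ n, c n = 0 ∧ ∀ k < n, c k ≠ 0 :=
      ⟨Nat.find hzero, Nat.find_spec hzero, fun k hk => Nat.find_min hzero hk⟩
    obtain ⟨u, hu⟩ := hbij.2 (X ^ n)
    have hlow := hT.coeff_eq_zero_of_coeff_apply_eq_zero hmin (u := u)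
      fun k hk => by rw [hu, coeff_X_pow, if_neg hk.ne]
    have h := hT u n hlow
    rw [hu, Nat.add_zero, hn, zero_mul, coeff_X_pow_self] at h
    exact one_ne_zero h
  · refine (injective_iff_map_eq_zero T).mpr fun u hu => ext fun n => ?_
    exact hT.coeff_eq_zero_of_coeff_apply_eq_zero (n := n + 1) (fun k _ => hc k)
      (fun k _ => by rw [hu, map_zero]) n n.lt_succ_self
  · obtain ⟨u, -, hu⟩ := hT.exists_apply_eq (M := 0) (p := 0) (fun n _ => hc n) (by simp)
    exact ⟨u, hu⟩

theorem not_injective (hT : IsTriangular T d c) (hd : 0 < d) (hc : ∀ᶠ n in atTop, c n ≠ 0) :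
    ¬ Function.Injective T := by
  obtain ⟨M, hM⟩ := eventually_atTop.mp hc
  -- the first `M` equations in the `M + d` lowest coefficients have a nonzero solution `p`
  let L : Polynomial.degreeLT K (M + d) →ₗ[K] Fin M → K :=
    LinearMap.pi (fun N : Fin M => coeff (N : ℕ)) ∘ₗ T ∘ₗ
      (Polynomial.coeToPowerSeries.algHom K).toLinearMap ∘ₗ (Polynomial.degreeLT K (M + d)).subtype
  have hfin := (Polynomial.degreeLTEquiv K (M + d)).finrank_eq
  have := LinearEquiv.finiteDimensional (Polynomial.degreeLTEquiv K (M + d)).symm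
  obtain ⟨⟨p, hpdeg⟩, hpL, hp0⟩ := Submodule.exists_mem_ne_zero_of_ne_bot
    (LinearMap.ker_ne_bot_of_finrank_lt (f := L) (by simp [hfin]; omega))
  obtain ⟨u, hup, hu⟩ := hT.exists_apply_eq (M := M + d) (p := p) (w := 0)
    (fun n hn => hM n (by omega)) fun N hN => by
      simpa [L] using congrFun (LinearMap.mem_ker.mp hpL) ⟨N, by omega⟩
  obtain ⟨i, hi⟩ : ∃ i, p.coeff i ≠ 0 := by
    by_contra! h
    exact hp0 (Subtype.ext (Polynomial.ext h))
  have hiM : i < M + d := by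
    by_contra! h
    exact hi (Polynomial.coeff_eq_zero_of_degree_lt
      ((Polynomial.mem_degreeLT.mp hpdeg).trans_le (by exact_mod_cast h)))
  intro hinj
  have hu0 : u = 0 := hinj (by rw [hu, map_zero])
  apply hi
  rw [← Polynomial.coeff_coe, ← hup i hiM, hu0, map_zero]

end IsTriangular

end PowerSeries

theorem coeff_dz_pow (j : ℕ) (u : ℂ⟦X⟧) (l : ℕ) :
    coeff l ((dz ^ j) u) = ((l + j).descFactorial j : ℂ) * coeff (l + j) u := by
  induction j generalizing u with
  | zero => simp
  | succ j ih =>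
    rw [pow_succ, Module.End.mul_apply, ih]
    simp only [dz, LinearMap.coe_mk, AddHom.coe_mk, coeff_mk, ← add_assoc,
      Nat.succ_descFactorial_succ]
    push_cast
    ring

theorem coeff_ordz_ne_zero {g : ℂ⟦X⟧} (hg : g ≠ 0) : coeff (ordz g) g ≠ 0 :=
  Nat.sInf_mem (s := {k | coeff k g ≠ 0}) (exists_coeff_ne_zero_iff_ne_zero.mpr hg)

theorem coeff_eq_zero_of_lt_ordz {g : ℂ⟦X⟧} {k : ℕ} (h : k < ordz g) : coeff k g = 0 := by
  simpa using Nat.notMem_of_lt_sInf (s := {k | coeff k g ≠ 0}) h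

theorem coeff_mul_dz_pow {g u : ℂ⟦X⟧} {j d N : ℕ} (hj : j ≤ ordz g + d)
    (hu : ∀ i < N + d, coeff i u = 0) :
    coeff N (g * (dz ^ j) u) =
      if (ordz g : ℤ) - j = -d then
        coeff (ordz g) g * (N + d).descFactorial j * coeff (N + d) u
      else 0 := by
  -- only the term pairing `g_{ordz g}` with `u_{N - ordz g + j}` can survive
  have hterm : ∀ k l, k + l = N → k ≠ ordz g → coeff k g * coeff l ((dz ^ j) u) = 0 := by
    intro k l hkl hk
    rcases hk.lt_or_gt with hk | hk
    · rw [coeff_eq_zero_of_lt_ordz hk, zero_mul]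
    · rw [coeff_dz_pow, hu _ (by omega), mul_zero, mul_zero]
  rw [coeff_mul]
  by_cases hN : ordz g ≤ N
  · rw [Finset.sum_eq_single_of_mem (ordz g, N - ordz g) (by simp; omega)
      fun ⟨k, l⟩ hkl hne => hterm k l (by simpa using hkl) fun hk => hne <| by
        rw [Finset.HasAntidiagonal.mem_antidiagonal] at hkl; ext <;> simp <;> omega,
      coeff_dz_pow]
    split_ifs with h
    · rw [show N - ordz g + j = N + d by omega]; ring
    · rw [hu _ (by omega), mul_zero, mul_zero]
  · rw [Finset.sum_eq_zero fun ⟨k, l⟩ hkl => hterm k l (by simpa using hkl)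
      (by rw [Finset.HasAntidiagonal.mem_antidiagonal] at hkl; omega)]
    split_ifs with h
    · rw [Nat.descFactorial_eq_zero_iff_lt.mpr (by omega)]; simp
    · rfl

theorem isTriangular_Pop {Λ : Finset ℕ} {a : ℕ → ℂ⟦X⟧} {d : ℕ}
    (hd : ∀ j ∈ Λ, j ≤ ordz (a j) + d) : IsTriangular (Pop Λ a) d (W Λ a (-d)) := by
  intro u N hu
  simp only [Pop, W, LinearMap.sum_apply, LinearMap.comp_apply, LinearMap.mulLeft_apply, map_sum,
    Finset.sum_filter, Finset.sum_mul]
  refine Finset.sum_congr rfl fun j hj => ?_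
  rw [coeff_mul_dz_pow (hd j hj) hu]
  split_ifs <;> simp

theorem coeff_zero_Pop {Λ : Finset ℕ} {a : ℕ → ℂ⟦X⟧} (h : ∀ j ∈ Λ, 0 < ordz (a j))
    (u : ℂ⟦X⟧) : coeff 0 (Pop Λ a u) = 0 := by
  simp only [Pop, LinearMap.sum_apply, LinearMap.comp_apply, LinearMap.mulLeft_apply, map_sum,
    coeff_zero_eq_constantCoeff_apply, map_mul]
  exact Finset.sum_eq_zero fun j hj => by
    rw [← coeff_zero_eq_constantCoeff_apply, coeff_eq_zero_of_lt_ordz (h j hj), zero_mul]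

noncomputable def charPoly (Λ : Finset ℕ) (a : ℕ → ℂ⟦X⟧) (q : ℤ) : Polynomial ℂ :=
  ∑ j ∈ Λ.filter (fun j => (ordz (a j) : ℤ) - j = q),
    Polynomial.C (coeff (ordz (a j)) (a j)) * descPochhammer ℂ j

theorem eval_charPoly (Λ : Finset ℕ) (a : ℕ → ℂ⟦X⟧) (q : ℤ) (n : ℕ) :
    (charPoly Λ a q).eval (n : ℂ) = W Λ a q n := by
  simp [charPoly, W, Polynomial.eval_finsetSum, descPochhammer_eval_eq_descFactorial]

theorem charPoly_ne_zero {Λ : Finset ℕ} {a : ℕ → ℂ⟦X⟧} (ha : ∀ j ∈ Λ, a j ≠ 0) {q : ℤ}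
    (hq : ∃ j ∈ Λ, (ordz (a j) : ℤ) - j = q) : charPoly Λ a q ≠ 0 := by
  set F := Λ.filter (fun j => (ordz (a j) : ℤ) - j = q)
  have hF : F.Nonempty := by
    obtain ⟨j, hj, hjq⟩ := hq
    exact ⟨j, Finset.mem_filter.mpr ⟨hj, hjq⟩⟩
  -- the summand of largest degree contributes the only term of that degree
  have hcoeff : (charPoly Λ a q).coeff (F.max' hF) = coeff (ordz (a (F.max' hF))) (a (F.max' hF)) := by
    rw [charPoly, Polynomial.finsetSum_coeff, Finset.sum_eq_single_of_mem _ (F.max'_mem hF)]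
    · have hlead := (monic_descPochhammer ℂ (F.max' hF)).coeff_natDegree
      rw [descPochhammer_natDegree] at hlead
      rw [Polynomial.coeff_C_mul, hlead, mul_one]
    · intro j hj hne
      rw [Polynomial.coeff_C_mul, Polynomial.coeff_eq_zero_of_natDegree_lt, mul_zero]
      rw [descPochhammer_natDegree]
      exact lt_of_le_of_ne (F.le_max' j hj) hne
  intro h0
  rw [h0, Polynomial.coeff_zero] at hcoeff
  exact coeff_ordz_ne_zero (ha _ (Finset.mem_filter.mp (F.max'_mem hF)).1) hcoeff.symm

theorem eventually_W_ne_zero {Λ : Finset ℕ} {a : ℕ → ℂ⟦X⟧} (ha : ∀ j ∈ Λ, a j ≠ 0) {q : ℤ}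
    (hq : ∃ j ∈ Λ, (ordz (a j) : ℤ) - j = q) : ∀ᶠ n in atTop, W Λ a q n ≠ 0 := by
  have hfin := (Polynomial.finite_setOfPred_isRoot (charPoly_ne_zero ha hq)).preimage
    Nat.cast_injective.injOn
  rw [← Nat.cofinite_eq_atTop]
  filter_upwards [hfin.eventually_cofinite_notMem] with n hn
  simpa [← eval_charPoly] using hn

/-- Theorem 1: `P(∂_z)` is a bijective `ℂ`-linear map of `ℂ[[z]]` onto itself iff
(a) the lower ordinate `m` of the Newton polygon is `0`, and
(b) `W_0(n) ≠ 0` for all `n ∈ ℕ₀`. -/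
theorem statement0 (Λ : Finset ℕ) (hΛ : Λ.Nonempty) (a : ℕ → PowerSeries ℂ)
    (ha : ∀ j ∈ Λ, a j ≠ 0) :
    Function.Bijective (Pop Λ a) ↔
      (Λ.inf' hΛ (fun j => (ordz (a j) : ℤ) - j) = 0 ∧
        ∀ n : ℕ, W Λ a 0 n ≠ 0) := by
  obtain ⟨j₀, hj₀, hm⟩ := Finset.exists_mem_eq_inf' hΛ (fun j => (ordz (a j) : ℤ) - j)
  have hle : ∀ j ∈ Λ, (ordz (a j₀) : ℤ) - j₀ ≤ (ordz (a j) : ℤ) - j :=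
    fun j hj => hm ▸ Finset.inf'_le _ hj
  rw [hm]
  rcases lt_trichotomy ((ordz (a j₀) : ℤ) - j₀) 0 with hneg | hzero | hpos
  · obtain ⟨d, hd⟩ : ∃ d : ℕ, (ordz (a j₀) : ℤ) - j₀ = -d := ⟨((j₀ : ℤ) - ordz (a j₀)).toNat, by omega⟩
    have hT := isTriangular_Pop (a := a) (d := d) fun j hj => by have := hle j hj; omega
    rw [← hd] at hT
    have hinj := hT.not_injective (by omega) (eventually_W_ne_zero ha ⟨j₀, hj₀, rfl⟩)
    exact iff_of_false (fun h => hinj h.1) fun h => hneg.ne h.1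
  · have hT := isTriangular_Pop (a := a) (d := 0) fun j hj => by have := hle j hj; omega
    rw [Nat.cast_zero, neg_zero] at hT
    simp [hzero, hT.bijective_iff]
  · have hsurj : ¬ Function.Surjective (Pop Λ a) := fun h => by
      obtain ⟨u, hu⟩ := h 1
      have h0 := coeff_zero_Pop (a := a) (fun j hj => by have := hle j hj; omega) u
      rw [hu, coeff_zero_one] at h0
      exact one_ne_zero h0
    exact iff_of_false (fun h => hsurj h.2) fun h => hpos.ne' h.1
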